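/- For every ℓ > 0, r > 0 and λ ≥ 0 (the derivative in λ being understood as the right derivative at λ = 0), the partial derivative of p with respect to λ is given by ∂_λ p(ℓ,λ,r) = ℓ · Σ_{N=0}^∞ e^{−λℓ}·(λℓ)^N/N! · P( [0,ℓ] ⊄ C_N and [0,ℓ] ⊆ C_N ∪ [U − (r/2)ℰ, U + (r/2)ℰ] ), where C_N = [−r·E_0, r·E_0] ∪ ⋃_{j=1}^N [U_j − (r/2)E_j, U_j + (r/2)E_j] ∪ [ℓ − r·E_{N+1}, ℓ + r·E_{N+1}] and (U, ℰ) is an additional independent pair with U uniform on [0,ℓ] and ℰ exponential with rate 1. -/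

import Mathlib

open MeasureTheory ProbabilityTheory

/-- The uniform probability measure on `[0,ℓ]` (normalized Lebesgue measure). -/
noncomputable def unifMeasure (ℓ : ℝ) : Measure ℝ :=
  ProbabilityTheory.cond volume (Set.Icc 0 ℓ)

instance (ℓ : ℝ) : IsFiniteMeasure (unifMeasure ℓ) := by
  constructor
  unfold unifMeasure ProbabilityTheory.cond
  rw [Measure.smul_apply, Measure.restrict_apply MeasurableSet.univ, Set.univ_inter,
    smul_eq_mul]
  exact lt_of_le_of_lt (ENNReal.inv_mul_le_one _) ENNReal.one_lt_top

instance : IsProbabilityMeasure (expMeasure 1) :=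
  isProbabilityMeasure_expMeasure one_pos

/-- The region `C_N` of `ℝ` covered in the one-dimensional Boolean model with `N`
interior points at positions `p.1 0, …, p.1 (N−1)` with radii `(r/2)·E_j`, and two
boundary points at `0` and `ℓ` with doubled radii `r·E_0` and `r·E_{N+1}`. -/
def covUnion (ℓ r : ℝ) (N : ℕ) (p : (Fin N → ℝ) × (Fin (N + 2) → ℝ)) : Set ℝ :=
  Set.Icc (-(r * p.2 0)) (r * p.2 0) ∪
    (⋃ j : Fin N,
      Set.Icc (p.1 j - r / 2 * p.2 j.succ.castSucc) (p.1 j + r / 2 * p.2 j.succ.castSucc)) ∪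
    Set.Icc (ℓ - r * p.2 (Fin.last (N + 1))) (ℓ + r * p.2 (Fin.last (N + 1)))

/-- `q_N(ℓ,r)`: the probability that `[0,ℓ]` is fully covered by the Boolean model with
`N` independent uniform interior points and independent exponential ranges. -/
noncomputable def qN (ℓ r : ℝ) (N : ℕ) : ENNReal :=
  ((Measure.pi fun _ : Fin N => unifMeasure ℓ).prod
      (Measure.pi fun _ : Fin (N + 2) => expMeasure 1))
    {p | Set.Icc 0 ℓ ⊆ covUnion ℓ r N p}

/-- `p(ℓ,λ,r) = Σ_N e^{−λℓ}(λℓ)^N/N! · q_N(ℓ,r)`: the probability that `[0,ℓ]` is fully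
covered when the number of interior points is Poisson with mean `λℓ`. -/
noncomputable def pcov (ℓ lam r : ℝ) : ℝ :=
  ∑' N : ℕ, Real.exp (-(lam * ℓ)) * (lam * ℓ) ^ N / (Nat.factorial N) * (qN ℓ r N).toReal

/-- The probability that `[0,ℓ] ⊄ C_N` but `[0,ℓ] ⊆ C_N ∪ [U − (r/2)ℰ, U + (r/2)ℰ]`,
where `(U, ℰ)` is an additional independent pair with `U` uniform on `[0,ℓ]` and `ℰ`
exponential with rate 1. -/
noncomputable def qplusN (ℓ r : ℝ) (N : ℕ) : ENNReal :=
  (((Measure.pi fun _ : Fin N => unifMeasure ℓ).prod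
        (Measure.pi fun _ : Fin (N + 2) => expMeasure 1)).prod
      ((unifMeasure ℓ).prod (expMeasure 1)))
    {p | ¬ Set.Icc 0 ℓ ⊆ covUnion ℓ r N p.1 ∧
      Set.Icc 0 ℓ ⊆ covUnion ℓ r N p.1 ∪
        Set.Icc (p.2.1 - r / 2 * p.2.2) (p.2.1 + r / 2 * p.2.2)}

/-!
Appending one uniformly placed interval with an independent exponential radius to a
configuration with `N` interior points yields one with `N + 1`, so `q_{N+1} = q_N + q⁺_N`, where
`q⁺_N` is the probability that the extra interval is exactly what completes the cover. Since
`p(λ) = e^{-λℓ} Σ q_N (λℓ)^N / N!` with `0 ≤ q_N ≤ 1`, the generating function may be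
differentiated termwise, giving `∂_λ p = ℓ e^{-λℓ} Σ (q_{N+1} - q_N) (λℓ)^N / N!`.
-/

lemma measurePreserving_insertNth {α : Type*} [MeasurableSpace α] (μ : Measure α) [SigmaFinite μ]
    {n : ℕ} (i : Fin (n + 1)) :
    MeasurePreserving (fun q : (Fin n → α) × α => Fin.insertNth i q.2 q.1)
      ((Measure.pi fun _ => μ).prod μ) (Measure.pi fun _ => μ) :=
  (measurePreserving_piFinSuccAbove (fun _ => μ) i).symm.comp Measure.measurePreserving_swap

lemma measurePreserving_prodProdProdComm {α β γ δ : Type*} [MeasurableSpace α]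
    [MeasurableSpace β] [MeasurableSpace γ] [MeasurableSpace δ] (μa : Measure α) (μb : Measure β)
    (μc : Measure γ) (μd : Measure δ) [SFinite μa] [SFinite μb] [SFinite μc] [SFinite μd] :
    MeasurePreserving (fun p : (α × β) × γ × δ => ((p.1.1, p.2.1), (p.1.2, p.2.2)))
      ((μa.prod μb).prod (μc.prod μd)) ((μa.prod μc).prod (μb.prod μd)) :=
  -- bottom-up: ((a,b),c,d) ↦ (a,b,c,d) ↦ (a,(b,c),d) ↦ (a,(c,b),d) ↦ (a,c,b,d) ↦ ((a,c),b,d)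
  ((measurePreserving_prodAssoc μa μc (μb.prod μd)).symm MeasurableEquiv.prodAssoc).comp <|
    ((MeasurePreserving.id μa).prod (measurePreserving_prodAssoc μc μb μd)).comp <|
    ((MeasurePreserving.id μa).prod
      (Measure.measurePreserving_swap.prod (MeasurePreserving.id μd))).comp <|
    ((MeasurePreserving.id μa).prod
      ((measurePreserving_prodAssoc μb μc μd).symm MeasurableEquiv.prodAssoc)).comp <|
    measurePreserving_prodAssoc μa μb (μc.prod μd)

lemma summable_mul_pow_div_factorial {b : ℕ → ℝ} {C : ℝ} (hb : ∀ n, |b n| ≤ C) (x : ℝ) :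
    Summable fun n => b n * x ^ n / n.factorial := by
  refine .of_norm_bounded ((Real.summable_pow_div_factorial |x|).mul_left C) fun n => ?_
  rw [Real.norm_eq_abs, abs_div, abs_mul, abs_pow, Nat.abs_cast, mul_div_assoc]
  gcongr
  exact hb n

lemma succ_mul_pow_div_factorial_succ (n : ℕ) (y : ℝ) :
    ((n : ℝ) + 1) * (y ^ n / (n + 1).factorial) = y ^ n / n.factorial := by
  rw [Nat.factorial_succ, Nat.cast_mul, Nat.cast_succ, ← mul_div_assoc,
    mul_div_mul_left _ _ (by positivity)]

lemma hasDerivAt_tsum_mul_pow_div_factorial {b : ℕ → ℝ} {C : ℝ} (hb : ∀ n, |b n| ≤ C) (x : ℝ) :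
    HasDerivAt (fun y => ∑' n, b n * y ^ n / n.factorial)
      (∑' n, b (n + 1) * x ^ n / n.factorial) x := by
  set R := |x| + 1
  have hx : x ∈ Set.Ioo (-R) R := abs_lt.1 (lt_add_one _)
  have h_term (n : ℕ) (y : ℝ) :
      HasDerivAt (fun y => b n * y ^ n / n.factorial)
        (b n * (n * y ^ (n - 1) / n.factorial)) y := by
    simpa [mul_div_assoc] using ((hasDerivAt_pow n y).const_mul (b n)).div_const (n.factorial : ℝ)
  have h_bound (n : ℕ) (y : ℝ) (hy : y ∈ Set.Ioo (-R) R) :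
      ‖b n * (n * y ^ (n - 1) / n.factorial)‖ ≤ C * (n * R ^ (n - 1) / n.factorial) := by
    rw [Real.norm_eq_abs, abs_mul, abs_div, abs_mul, abs_pow, Nat.abs_cast, Nat.abs_cast]
    gcongr
    · exact (abs_nonneg _).trans (hb 0)
    · exact hb n
    · exact (abs_lt.2 hy).le
  have h_summable : Summable fun n : ℕ => C * (n * R ^ (n - 1) / n.factorial) := by
    refine (summable_nat_add_iff 1).1 ?_
    simpa [mul_div_assoc, succ_mul_pow_div_factorial_succ] using
      (Real.summable_pow_div_factorial R).mul_left C
  have h_shift : ∑' n, b n * (n * x ^ (n - 1) / n.factorial) =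
      ∑' n, b (n + 1) * x ^ n / n.factorial := by
    rw [tsum_eq_zero_add']
    · simp [succ_mul_pow_div_factorial_succ, mul_div_assoc]
    · simpa [succ_mul_pow_div_factorial_succ, mul_div_assoc] using
        summable_mul_pow_div_factorial (fun n => hb (n + 1)) x
  rw [← h_shift]
  exact hasDerivAt_tsum_of_isPreconnected h_summable isOpen_Ioo isPreconnected_Ioo
    (fun n y _ => h_term n y) h_bound hx (summable_mul_pow_div_factorial hb x) hx

lemma hasDerivAt_tsum_poisson_mul {b : ℕ → ℝ} {C : ℝ} (hb : ∀ n, |b n| ≤ C) (ℓ x : ℝ) :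
    HasDerivAt (fun l => ∑' n, Real.exp (-(l * ℓ)) * (l * ℓ) ^ n / n.factorial * b n)
      (ℓ * ∑' n, Real.exp (-(x * ℓ)) * (x * ℓ) ^ n / n.factorial * (b (n + 1) - b n)) x := by
  have h_factor (l : ℝ) : ∑' n, Real.exp (-(l * ℓ)) * (l * ℓ) ^ n / n.factorial * b n =
      Real.exp (-(l * ℓ)) * ∑' n, b n * (l * ℓ) ^ n / n.factorial := by
    rw [← tsum_mul_left]
    congr 1 with n
    ring
  have h_lin : HasDerivAt (fun l => l * ℓ) ℓ x := by simpa using (hasDerivAt_id x).mul_const ℓ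
  have h_exp := (Real.hasDerivAt_exp (-(x * ℓ))).comp x h_lin.neg
  have h_gen := (hasDerivAt_tsum_mul_pow_div_factorial hb (x * ℓ)).comp x h_lin
  have h_diff : ∑' n, Real.exp (-(x * ℓ)) * (x * ℓ) ^ n / n.factorial * (b (n + 1) - b n) =
      Real.exp (-(x * ℓ)) * (∑' n, b (n + 1) * (x * ℓ) ^ n / n.factorial -
        ∑' n, b n * (x * ℓ) ^ n / n.factorial) := by
    rw [← Summable.tsum_sub (summable_mul_pow_div_factorial (fun n => hb (n + 1)) _)
      (summable_mul_pow_div_factorial hb _), ← tsum_mul_left]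
    congr 1 with n
    ring
  simp_rw [h_factor]
  rw [h_diff]
  exact (h_exp.mul h_gen).congr_deriv (by simp only [Function.comp_apply, Pi.neg_apply]; ring)

lemma isProbabilityMeasure_unifMeasure {ℓ : ℝ} (hℓ : 0 < ℓ) :
    IsProbabilityMeasure (unifMeasure ℓ) :=
  cond_isProbabilityMeasure_of_finite (by simp [hℓ]) (by simp)

lemma isClosed_setOf_mem_covUnion (ℓ r x : ℝ) (N : ℕ) :
    IsClosed {p | x ∈ covUnion ℓ r N p} := by
  simp only [covUnion, Set.mem_union, Set.mem_iUnion, Set.mem_Icc, Set.ofPred_or,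
    Set.ofPred_exists, Set.ofPred_and]
  refine ((IsClosed.union ?_ (isClosed_iUnion_of_finite fun j => ?_)).union ?_) <;>
    exact (isClosed_le (by fun_prop) (by fun_prop)).inter (isClosed_le (by fun_prop) (by fun_prop))

lemma measurableSet_setOf_Icc_subset_covUnion (ℓ r : ℝ) (N : ℕ) :
    MeasurableSet {p | Set.Icc 0 ℓ ⊆ covUnion ℓ r N p} := by
  simp only [Set.subset_def, Set.ofPred_forall]
  exact (isClosed_biInter fun x _ => isClosed_setOf_mem_covUnion ℓ r x N).measurableSet

lemma covUnion_succ (ℓ r : ℝ) (N : ℕ) (u : Fin N → ℝ) (e : Fin (N + 2) → ℝ) (v w : ℝ) :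
    covUnion ℓ r (N + 1) (Fin.snoc u v, Fin.insertNth (Fin.last (N + 1)).castSucc w e) =
      covUnion ℓ r N (u, e) ∪ Set.Icc (v - r / 2 * w) (v + r / 2 * w) := by
  set e' := Fin.insertNth (α := fun _ => ℝ) (Fin.last (N + 1)).castSucc w e
  have h_first : e' 0 = e 0 := by simp [e', Fin.insertNth_apply_below, Fin.lt_def]
  have h_last : e' (Fin.last _) = e (Fin.last _) := by
    simp [e', Fin.insertNth_apply_above, Fin.lt_def, Fin.pred_last]
  have h_old (k : Fin N) : e' k.castSucc.succ.castSucc = e k.succ.castSucc := by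
    simp [e', Fin.insertNth_apply_below, Fin.lt_def]
    rfl
  have h_new : e' (Fin.last N).succ.castSucc = w := by simp [e']
  ext x
  simp only [covUnion, Set.mem_union, Set.mem_iUnion, Fin.exists_fin_succ', Fin.snoc_castSucc,
    Fin.snoc_last, h_first, h_last, h_old, h_new]
  tauto

lemma qN_succ {ℓ : ℝ} (hℓ : 0 < ℓ) (r : ℝ) (N : ℕ) :
    qN ℓ r (N + 1) = qN ℓ r N + qplusN ℓ r N := by
  have := isProbabilityMeasure_unifMeasure hℓ
  set φ := fun p : ((Fin N → ℝ) × (Fin (N + 2) → ℝ)) × ℝ × ℝ =>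
    (Fin.insertNth (α := fun _ => ℝ) (Fin.last N) p.2.1 p.1.1,
      Fin.insertNth (α := fun _ => ℝ) (Fin.last (N + 1)).castSucc p.2.2 p.1.2)
  have hφ : MeasurePreserving φ _ _ :=
    ((measurePreserving_insertNth (unifMeasure ℓ) (Fin.last N)).prod
      (measurePreserving_insertNth (expMeasure 1) (Fin.last (N + 1)).castSucc)).comp
    (measurePreserving_prodProdProdComm (Measure.pi fun _ : Fin N => unifMeasure ℓ)
      (Measure.pi fun _ : Fin (N + 2) => expMeasure 1) (unifMeasure ℓ) (expMeasure 1))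
  set E := {p | Set.Icc 0 ℓ ⊆ covUnion ℓ r N p}
  set G : Set (((Fin N → ℝ) × (Fin (N + 2) → ℝ)) × ℝ × ℝ) :=
    {p | ¬ Set.Icc 0 ℓ ⊆ covUnion ℓ r N p.1 ∧ Set.Icc 0 ℓ ⊆
      covUnion ℓ r N p.1 ∪ Set.Icc (p.2.1 - r / 2 * p.2.2) (p.2.1 + r / 2 * p.2.2)}
  have h_split : φ ⁻¹' {p | Set.Icc 0 ℓ ⊆ covUnion ℓ r (N + 1) p} = E ×ˢ Set.univ ∪ G := by
    ext p
    simp only [Set.mem_preimage, Set.mem_ofPred_eq, φ, Fin.insertNth_last', covUnion_succ,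
      Set.mem_union, Set.mem_prod, Set.mem_univ, and_true, E, G]
    constructor
    · intro h
      by_cases hE : Set.Icc 0 ℓ ⊆ covUnion ℓ r N p.1 <;> tauto
    · rintro (h | ⟨-, h⟩)
      · exact h.trans Set.subset_union_left
      · exact h
  have h_disj : Disjoint (E ×ˢ Set.univ) G :=
    Set.disjoint_left.2 fun p hp hp' => hp'.1 hp.1
  rw [qN, ← hφ.measure_preimage
      (measurableSet_setOf_Icc_subset_covUnion ℓ r (N + 1)).nullMeasurableSet, h_split,
    measure_union' h_disj ((measurableSet_setOf_Icc_subset_covUnion ℓ r N).prod .univ),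
    Measure.prod_prod, measure_univ, mul_one]
  rfl

lemma qN_le_one {ℓ : ℝ} (hℓ : 0 < ℓ) (r : ℝ) (N : ℕ) : qN ℓ r N ≤ 1 := by
  have := isProbabilityMeasure_unifMeasure hℓ
  exact prob_le_one

lemma toReal_qplusN {ℓ : ℝ} (hℓ : 0 < ℓ) (r : ℝ) (N : ℕ) :
    (qplusN ℓ r N).toReal = (qN ℓ r (N + 1)).toReal - (qN ℓ r N).toReal := by
  have h_fin : qN ℓ r N + qplusN ℓ r N ≠ ⊤ := by
    rw [← qN_succ hℓ]
    exact ((qN_le_one hℓ r (N + 1)).trans_lt ENNReal.one_lt_top).ne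
  obtain ⟨hq, hq_plus⟩ := ENNReal.add_ne_top.1 h_fin
  rw [qN_succ hℓ, ENNReal.toReal_add hq hq_plus]
  ring

theorem stmt_8_general (ℓ r lam : ℝ) (hℓ : 0 < ℓ) :
    HasDerivWithinAt (fun l => pcov ℓ l r)
      (ℓ * ∑' N : ℕ, Real.exp (-(lam * ℓ)) * (lam * ℓ) ^ N / (Nat.factorial N) *
        (qplusN ℓ r N).toReal)
      (Set.Ici 0) lam := by
  have h_bound (N : ℕ) : |(qN ℓ r N).toReal| ≤ 1 := by
    rw [abs_of_nonneg ENNReal.toReal_nonneg]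
    exact ENNReal.toReal_le_of_le_ofReal zero_le_one (by simpa using qN_le_one hℓ r N)
  simp_rw [toReal_qplusN hℓ]
  exact (hasDerivAt_tsum_poisson_mul h_bound ℓ lam).hasDerivWithinAt

/-- For every `ℓ > 0`, `r > 0` and `λ ≥ 0` (right derivative at `λ = 0`), the partial
derivative of `p` with respect to `λ` is
`∂_λ p(ℓ,λ,r) = ℓ · Σ_N e^{−λℓ}(λℓ)^N/N! · P([0,ℓ] ⊄ C_N and [0,ℓ] ⊆ C_N ∪ [U ± (r/2)ℰ])`. -/
theorem stmt_8 (ℓ r lam : ℝ) (hℓ : 0 < ℓ) (hr : 0 < r) (hlam : 0 ≤ lam) :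
    HasDerivWithinAt (fun l => pcov ℓ l r)
      (ℓ * ∑' N : ℕ, Real.exp (-(lam * ℓ)) * (lam * ℓ) ^ N / (Nat.factorial N) *
        (qplusN ℓ r N).toReal)
      (Set.Ici 0) lam :=
  stmt_8_general ℓ r lam hℓ
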